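/- arXiv:2510.21247 — 2 statements merged into one kernel-verified Lean document; each statement's English description precedes it below -/
import Mathlib

section
/- Let L/k be a finite Galois extension with Galois group G, let n be a positive integer, and suppose G acts on the index set {1,...,n}. Consider the G-module M = (L^×)^n with twisted permutation action (σ·x)_i = σ(x_{σ^{-1}(i)}). Then every 1-cocycle D : G → M (i.e. every map satisfying D(στ)_i = D(σ)_i · σ(D(τ)_{σ^{-1}(i)}) for all σ, τ ∈ G and all i) is a coboundary: there exists x ∈ (L^×)^n such that D(τ)_i = τ(x_{τ^{-1}(i)}) · x_i^{-1} for all τ ∈ G and all i. Equivalently, H^1(G, M) = 0. -/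
/-!
As in Noether's proof of Hilbert 90, a nonvanishing solution `X` of
`X i = D τ i * τ (X (τ⁻¹ • i))` is obtained as a twisted average
`X i = ∑ σ, D σ i * σ (c (σ⁻¹ • i))`; then `x = X⁻¹` is the required cochain. Take `c`
supported on a set of orbit representatives: at a representative `j` only the stabilizer
of `j` contributes, so Dedekind's independence of characters gives a value of `c j` with
`X j ≠ 0`, and the twisted invariance of `X` spreads this across the orbit of `j`.
-/

open MulAction Finset

theorem exists_sum_mul_algEquiv_apply_ne_zero {K L : Type*} [Field K] [Field L] [Algebra K L]
    (S : Finset (L ≃ₐ[K] L)) (a : (L ≃ₐ[K] L) → L) {σ₀ : L ≃ₐ[K] L} (hσ₀ : σ₀ ∈ S)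
    (ha : a σ₀ ≠ 0) : ∃ t : L, ∑ σ ∈ S, a σ * σ t ≠ 0 := by
  by_contra! h
  have hli : LinearIndependent L (fun σ : L ≃ₐ[K] L ↦ (σ : L → L)) :=
    (linearIndependent_monoidHom L L).comp (ι' := L ≃ₐ[K] L) (fun σ ↦ σ)
      fun σ τ hστ ↦ AlgEquiv.ext (DFunLike.congr_fun hστ :)
  exact ha (linearIndependent_iff'.1 hli S a (funext fun t ↦ by simpa using h t) σ₀ hσ₀)

section TwistedPermutation

variable {K L ι : Type*} [Field K] [Field L] [Algebra K L] [MulAction (L ≃ₐ[K] L) ι]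

def IsTwistedPermCocycle (D : (L ≃ₐ[K] L) → ι → L) : Prop :=
  ∀ σ τ i, D (σ * τ) i = D σ i * σ (D τ (σ⁻¹ • i))

variable [FiniteDimensional K L]

noncomputable def twistedAverage (D : (L ≃ₐ[K] L) → ι → L) (c : ι → L) (i : ι) : L :=
  ∑ σ, D σ i * σ (c (σ⁻¹ • i))

variable {D : (L ≃ₐ[K] L) → ι → L}

theorem IsTwistedPermCocycle.twistedAverage_eq (hD : IsTwistedPermCocycle D) (c : ι → L)
    (τ : L ≃ₐ[K] L) (i : ι) :
    twistedAverage D c i = D τ i * τ (twistedAverage D c (τ⁻¹ • i)) := by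
  simp only [twistedAverage, map_sum, mul_sum, map_mul]
  refine (Fintype.sum_equiv (Equiv.mulLeft τ) _ _ fun σ ↦ ?_).symm
  simp [hD τ σ i, mul_smul, mul_assoc]

theorem twistedAverage_eq_sum_fixing [DecidableEq ι] (c : ι → L) {j : ι}
    (hc : ∀ σ : L ≃ₐ[K] L, σ • j ≠ j → c (σ • j) = 0) :
    twistedAverage D c j = ∑ σ with σ • j = j, D σ j * σ (c j) := by
  rw [twistedAverage, sum_filter]
  refine sum_congr rfl fun σ _ ↦ ?_
  split_ifs with hσ
  · rw [inv_smul_eq_iff.2 hσ.symm]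
  · rw [hc σ⁻¹ (fun h ↦ hσ (inv_smul_eq_iff.1 h).symm), map_zero, mul_zero]

theorem exists_twistedAverage_ne_zero (hD : IsTwistedPermCocycle D) (hD0 : ∀ σ i, D σ i ≠ 0) :
    ∃ c : ι → L, ∀ i, twistedAverage D c i ≠ 0 := by
  classical
  let rep (i : ι) : ι := (⟦i⟧ : orbitRel.Quotient (L ≃ₐ[K] L) ι).out
  have rep_smul (σ : L ≃ₐ[K] L) (i : ι) : rep (σ • i) = rep i := by
    simp only [rep, orbitRel.Quotient.quotient_smul_eq]
  have rep_rep (i : ι) : rep (rep i) = rep i := by simp only [rep, Quotient.out_eq]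
  choose t ht using fun j : ι ↦
    exists_sum_mul_algEquiv_apply_ne_zero {σ | σ • j = j} (D · j) (by simp) (hD0 1 j)
  let c : ι → L := fun i ↦ if rep i = i then t i else 0
  have ne_zero_at_rep (j : ι) (hj : rep j = j) : twistedAverage D c j ≠ 0 := by
    rw [twistedAverage_eq_sum_fixing c fun σ hσ ↦ if_neg (by rwa [rep_smul, hj, eq_comm])]
    simpa [c, hj] using ht j
  refine ⟨c, fun i ↦ ?_⟩
  obtain ⟨σ, hσ⟩ := mem_orbit_iff.1 (Quotient.mk_out (s := orbitRel (L ≃ₐ[K] L) ι) i)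
  rw [hD.twistedAverage_eq c σ⁻¹, inv_inv, hσ]
  exact mul_ne_zero (hD0 _ _) ((map_ne_zero _).2 (ne_zero_at_rep _ (rep_rep i)))

theorem IsTwistedPermCocycle.exists_coboundary (hD : IsTwistedPermCocycle D)
    (hD0 : ∀ σ i, D σ i ≠ 0) :
    ∃ x : ι → L, (∀ i, x i ≠ 0) ∧ ∀ τ i, D τ i = τ (x (τ⁻¹ • i)) * (x i)⁻¹ := by
  obtain ⟨c, hc⟩ := exists_twistedAverage_ne_zero hD hD0
  refine ⟨fun i ↦ (twistedAverage D c i)⁻¹, fun i ↦ inv_ne_zero (hc i), fun τ i ↦ ?_⟩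
  rw [map_inv₀, inv_inv, hD.twistedAverage_eq c τ i, mul_comm (D τ i),
    inv_mul_cancel_left₀ ((map_ne_zero τ).2 (hc _))]

end TwistedPermutation

theorem twisted_permutation_H1_trivial_general (k L : Type*) [Field k] [Field L] [Algebra k L]
    [FiniteDimensional k L] (n : ℕ)
    (ρ : (L ≃ₐ[k] L) →* Equiv.Perm (Fin n))
    (D : (L ≃ₐ[k] L) → Fin n → L)
    (hD0 : ∀ σ i, D σ i ≠ 0)
    (hcocycle : ∀ (σ τ : L ≃ₐ[k] L) (i : Fin n),
      D (σ * τ) i = D σ i * σ (D τ ((ρ σ)⁻¹ i))) :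
    ∃ x : Fin n → L, (∀ i, x i ≠ 0) ∧
      ∀ (τ : L ≃ₐ[k] L) (i : Fin n), D τ i = τ (x ((ρ τ)⁻¹ i)) * (x i)⁻¹ := by
  let _ : MulAction (L ≃ₐ[k] L) (Fin n) := MulAction.compHom (Fin n) ρ
  have inv_smul (σ : L ≃ₐ[k] L) (i : Fin n) : σ⁻¹ • i = (ρ σ)⁻¹ i := by
    rw [MulAction.compHom_smul_def, map_inv]
    rfl
  have hD : IsTwistedPermCocycle D := fun σ τ i ↦ by rw [inv_smul]; exact hcocycle σ τ i
  simpa only [inv_smul] using hD.exists_coboundary hD0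

/-- Generalized Hilbert 90: for a finite Galois extension `L/k` with group
`G = Gal(L/k)` acting on `{1,…,n}` via `ρ`, every 1-cocycle of `G` valued in `(L^×)^n`
with the twisted permutation action is a coboundary, i.e. `H¹(G, (L^×)^n) = 0`. -/
theorem twisted_permutation_H1_trivial (k L : Type*) [Field k] [Field L] [Algebra k L]
    [IsGalois k L] [FiniteDimensional k L] (n : ℕ) (hn : 0 < n)
    (ρ : (L ≃ₐ[k] L) →* Equiv.Perm (Fin n))
    (D : (L ≃ₐ[k] L) → Fin n → L)
    (hD0 : ∀ σ i, D σ i ≠ 0)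
    (hcocycle : ∀ (σ τ : L ≃ₐ[k] L) (i : Fin n),
      D (σ * τ) i = D σ i * σ (D τ ((ρ σ)⁻¹ i))) :
    ∃ x : Fin n → L, (∀ i, x i ≠ 0) ∧
      ∀ (τ : L ≃ₐ[k] L) (i : Fin n), D τ i = τ (x ((ρ τ)⁻¹ i)) * (x i)⁻¹ :=
  twisted_permutation_H1_trivial_general k L n ρ D hD0 hcocycle
end

section
/- Let L/k be a finite Galois extension with group G, let n be a positive integer with a G-action on {1,...,n}, and let V be an n-dimensional L-vector space with basis ω_1,...,ω_n. Suppose G acts on V semilinearly (σ(a·v) = σ(a)·σ(v) for a ∈ L) in such a way that for each σ ∈ G and each i there exists d_i(σ) ∈ L^× with σ(ω_i) = d_i(σ)·ω_{σ(i)}. Then there exist scalars x_1,...,x_n ∈ L^× such that the rescaled basis ω'_i = x_i·ω_i satisfies σ(ω'_i) = ω'_{σ(i)} for all σ ∈ G and all i. -/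
/-!
The matrices of the `σ ∈ G` in the basis `ω` are monomial, so `d` is a 1-cocycle of `G` with
values in the module `(Lˣ)ⁿ` induced from the stabilizers of the indices, and rescalings `x` that turn the action into a permutation of
the basis are exactly the trivialisations of this cocycle. By Shapiro's lemma it suffices to
trivialise, for a representative `i` of each orbit, the restriction `h ↦ d h i` to the stabilizer
`H` of `i`: a fixed point `y` of the twisted action `h ↦ h(y) d h i` of `H` on `Lˣ` is transported
to the whole orbit as `x (g • i) = g(y) d g i`. Since `H = Gal(L/L^H)`, that restriction is a
coboundary by Hilbert's Theorem 90.
-/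

open groupCohomology MulAction

section Coinduced

variable {G M ι : Type*} [Group G] [CommGroup M] [MulDistribMulAction G M] [MulAction G ι]

/-- The cocycle condition for a 1-cochain `F` of `G` with values in `ι → M`, on which `G` acts by
`(g • F) j = g • F (g⁻¹ • j)`, written in the coordinates `d g i = F g (g • i)`. -/
def IsMulCocycle₁Perm (d : G → ι → M) : Prop :=
  ∀ (g h : G) (i : ι), d (g * h) i = g • d h i * d g (h • i)

namespace IsMulCocycle₁Perm

variable {d : G → ι → M}

/-- The cocycle condition says exactly that `g • (i, y) = (g • i, g • y * d g i)` is an action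
of `G` on `ι × M`. -/
theorem smul_mul_mul (hd : IsMulCocycle₁Perm d) (g h : G) (i : ι) (y : M) :
    g • (h • y * d h i) * d g (h • i) = (g * h) • y * d (g * h) i := by
  rw [hd, smul_mul', mul_smul, mul_assoc]

theorem isMulCocycle₁_stabilizer (hd : IsMulCocycle₁Perm d) (i : ι) :
    IsMulCocycle₁ fun h : stabilizer G i => d h i := fun g h => by
  simp only [Subgroup.coe_mul, hd g h i, mem_stabilizer_iff.mp h.2]
  rfl

theorem smul_mul_eq_of_smul_eq (hd : IsMulCocycle₁Perm d) {i : ι} {y : M}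
    (hy : ∀ h ∈ stabilizer G i, h • y * d h i = y) {g g' : G} (hg : g • i = g' • i) :
    g • y * d g i = g' • y * d g' i := by
  have hmem : g⁻¹ * g' ∈ stabilizer G i := by
    rw [mem_stabilizer_iff, mul_smul, ← hg, inv_smul_smul]
  calc g • y * d g i = g • ((g⁻¹ * g') • y * d (g⁻¹ * g') i) * d g ((g⁻¹ * g') • i) := by
        rw [hy _ hmem, mem_stabilizer_iff.mp hmem]
    _ = g' • y * d g' i := by rw [smul_mul_mul hd, mul_inv_cancel_left]

/-- Shapiro's lemma for `H¹`, in the form of an explicit trivialisation. -/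
theorem exists_smul_mul_eq (hd : IsMulCocycle₁Perm d)
    (hstab : ∀ i, IsMulCoboundary₁ fun h : stabilizer G i => d h i) :
    ∃ x : ι → M, ∀ (g : G) (i : ι), g • x i * d g i = x (g • i) := by
  choose β hβ using hstab
  have hfix : ∀ i, ∀ h ∈ stabilizer G i, h • (β i)⁻¹ * d h i = (β i)⁻¹ := fun i h hh => by
    have hcob : h • β i / β i = d h i := hβ i ⟨h, hh⟩
    rw [← hcob, smul_inv', div_eq_mul_inv, inv_mul_cancel_left]
  let r : ι → ι := fun j => (Quotient.mk (orbitRel G ι) j).out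
  have hr_smul : ∀ (g : G) (j : ι), r (g • j) = r j := fun g j =>
    congrArg Quotient.out (Quotient.sound (mem_orbit j g))
  have hr_orbit : ∀ j, ∃ g : G, g • r j = j := fun j =>
    mem_orbit_symm.mp (Quotient.mk_out (s := orbitRel G ι) j)
  choose s hs using hr_orbit
  refine ⟨fun j => s j • (β (r j))⁻¹ * d (s j) (r j), fun g j => ?_⟩
  dsimp only
  have hcomp := smul_mul_mul hd g (s j) (r j) (β (r j))⁻¹
  rw [hs j] at hcomp
  rw [hcomp, hr_smul]
  exact smul_mul_eq_of_smul_eq hd (hfix _) (by rw [mul_smul, hs, ← hr_smul g j, hs])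

end IsMulCocycle₁Perm

end Coinduced

theorem groupCohomology.isMulCoboundary₁_of_isMulCocycle₁_of_subgroup_aut_to_units
    {k L : Type*} [Field k] [Field L] [Algebra k L] [FiniteDimensional k L]
    {H : Subgroup (L ≃ₐ[k] L)} {f : H → Lˣ} (hf : IsMulCocycle₁ f) : IsMulCoboundary₁ f := by
  let e := IntermediateField.subgroupEquivAlgEquiv H
  obtain ⟨β, hβ⟩ := isMulCoboundary₁_of_isMulCocycle₁_of_aut_to_units (f ∘ e.symm)
    fun g h => by rw [Function.comp_apply, map_mul]; exact hf (e.symm g) (e.symm h)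
  refine ⟨β, fun h => ?_⟩
  have hcob := hβ (e h)
  rwa [Function.comp_apply, e.symm_apply_apply] at hcob

theorem isMulCocycle₁Perm_of_apply_eq_smul {k L V ι : Type*} [CommRing k] [Field L]
    [Algebra k L] [AddCommGroup V] [Module L V] [MulAction (L ≃ₐ[k] L) ι]
    (Φ : (L ≃ₐ[k] L) → V → V) (hΦmul : ∀ (σ τ : L ≃ₐ[k] L) (v : V), Φ (σ * τ) v = Φ σ (Φ τ v))
    (hΦsmul : ∀ (σ : L ≃ₐ[k] L) (a : L) (v : V), Φ σ (a • v) = σ a • Φ σ v)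
    (ω : ι → V) (hω : ∀ i, ω i ≠ 0) (d : (L ≃ₐ[k] L) → ι → Lˣ)
    (hd : ∀ (σ : L ≃ₐ[k] L) (i : ι), Φ σ (ω i) = (d σ i : L) • ω (σ • i)) :
    IsMulCocycle₁Perm d := fun σ τ i => by
  refine Units.ext (smul_left_injective L (hω ((σ * τ) • i)) ?_)
  dsimp only
  rw [← hd, hΦmul, hd τ, hΦsmul, hd σ, smul_smul, ← mul_smul σ τ i, Units.val_mul,
    AlgEquiv.smul_units_def, Units.coe_map]
  rfl

theorem rescale_to_permutation_basis_general (k L : Type*) [Field k] [Field L] [Algebra k L]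
    [FiniteDimensional k L] (n : ℕ)
    (V : Type*) [AddCommGroup V] [Module L V]
    (ω : Module.Basis (Fin n) L V)
    (ρ : (L ≃ₐ[k] L) →* Equiv.Perm (Fin n))
    (Φ : (L ≃ₐ[k] L) → V → V)
    (hΦmul : ∀ (σ τ : L ≃ₐ[k] L) (v : V), Φ (σ * τ) v = Φ σ (Φ τ v))
    (hΦsmul : ∀ (σ : L ≃ₐ[k] L) (a : L) (v : V), Φ σ (a • v) = σ a • Φ σ v)
    (d : (L ≃ₐ[k] L) → Fin n → Lˣ)
    (hperm : ∀ (σ : L ≃ₐ[k] L) (i : Fin n), Φ σ (ω i) = (d σ i : L) • ω (ρ σ i)) :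
    ∃ x : Fin n → Lˣ,
      ∀ (σ : L ≃ₐ[k] L) (i : Fin n),
        Φ σ ((x i : L) • ω i) = (x (ρ σ i) : L) • ω (ρ σ i) := by
  let _ : MulAction (L ≃ₐ[k] L) (Fin n) := MulAction.compHom _ ρ
  have hd : IsMulCocycle₁Perm d :=
    isMulCocycle₁Perm_of_apply_eq_smul Φ hΦmul hΦsmul ω ω.ne_zero d hperm
  obtain ⟨x, hx⟩ := hd.exists_smul_mul_eq fun i =>
    isMulCoboundary₁_of_isMulCocycle₁_of_subgroup_aut_to_units (hd.isMulCocycle₁_stabilizer i)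
  refine ⟨x, fun σ i => ?_⟩
  rw [hΦsmul, hperm, smul_smul]
  exact congrArg (fun u : Lˣ => (u : L) • ω (ρ σ i)) (hx σ i)

/-- A semilinear Galois action that permutes the lines spanned by a basis (up to scalars)
according to an action of `G = Gal(L/k)` on the index set can be made an honest
permutation of a rescaled basis. -/
theorem rescale_to_permutation_basis (k L : Type*) [Field k] [Field L] [Algebra k L]
    [IsGalois k L] [FiniteDimensional k L] (n : ℕ) (hn : 0 < n)
    (V : Type*) [AddCommGroup V] [Module L V]
    (ω : Module.Basis (Fin n) L V)
    (ρ : (L ≃ₐ[k] L) →* Equiv.Perm (Fin n))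
    (Φ : (L ≃ₐ[k] L) → V → V)
    (hΦone : ∀ v : V, Φ 1 v = v)
    (hΦmul : ∀ (σ τ : L ≃ₐ[k] L) (v : V), Φ (σ * τ) v = Φ σ (Φ τ v))
    (hΦadd : ∀ (σ : L ≃ₐ[k] L) (v w : V), Φ σ (v + w) = Φ σ v + Φ σ w)
    (hΦsmul : ∀ (σ : L ≃ₐ[k] L) (a : L) (v : V), Φ σ (a • v) = σ a • Φ σ v)
    (d : (L ≃ₐ[k] L) → Fin n → Lˣ)
    (hperm : ∀ (σ : L ≃ₐ[k] L) (i : Fin n), Φ σ (ω i) = (d σ i : L) • ω (ρ σ i)) :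
    ∃ x : Fin n → Lˣ,
      ∀ (σ : L ≃ₐ[k] L) (i : Fin n),
        Φ σ ((x i : L) • ω i) = (x (ρ σ i) : L) • ω (ρ σ i) :=
  rescale_to_permutation_basis_general k L n V ω ρ Φ hΦmul hΦsmul d hperm
end
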